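/- arXiv:1403.1424 — 4 statements merged into one kernel-verified Lean document; each statement's English description precedes it below -/
import Mathlib

section
/- For density matrices ρ and σ, (1/‖√ρ+√σ‖₂²)·‖ρ − σ‖₁² ≤ ‖√ρ − √σ‖₂² ≤ ‖ρ − σ‖₁; in particular (1/4)‖ρ − σ‖₁² ≤ ‖√ρ − √σ‖₂². -/
open Matrix
open scoped ComplexOrder

noncomputable def matLog {n : Type*} [Fintype n] [DecidableEq n] (A : Matrix n n ℂ) : Matrix n n ℂ :=
  cfc Real.log A

noncomputable def msqrt {n : Type*} [Fintype n] [DecidableEq n] (A : Matrix n n ℂ) : Matrix n n ℂ :=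
  cfc Real.sqrt A

noncomputable def mexp {n : Type*} [Fintype n] [DecidableEq n] (A : Matrix n n ℂ) : Matrix n n ℂ :=
  NormedSpace.exp A

/-- trace norm ‖A‖₁ = Tr √(AᴴA) -/
noncomputable def traceNorm {n : Type*} [Fintype n] [DecidableEq n] (A : Matrix n n ℂ) : ℝ :=
  (msqrt (Aᴴ * A)).trace.re

/-- Hilbert–Schmidt norm ‖A‖₂ = √Tr(AᴴA) -/
noncomputable def hsNorm {n : Type*} [Fintype n] [DecidableEq n] (A : Matrix n n ℂ) : ℝ :=
  Real.sqrt ((Aᴴ * A).trace.re)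

/-- von Neumann entropy S(ρ) = −Tr(ρ log ρ) -/
noncomputable def vnEnt {n : Type*} [Fintype n] [DecidableEq n] (ρ : Matrix n n ℂ) : ℝ :=
  -((ρ * matLog ρ).trace.re)

/-!
Put `A = √ρ`, `B = √σ`, `Δ = A - B`, `D = A + B`, so that `ΔD + DΔ = 2(ρ - σ)`.

Upper bound (Powers–Størmer): in an eigenbasis of `Δ` with eigenvalues `λᵢ`, the diagonal of
`ρ - σ` is `λᵢ Dᵢᵢ`, and `Dᵢᵢ ≥ |λᵢ|` because `D ± Δ` is `2A` or `2B`, hence positive. So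
`‖Δ‖₂² = ∑ λᵢ² ≤ ∑ |(ρ - σ)ᵢᵢ| ≤ ‖ρ - σ‖₁`, the last step since `|ρ - σ| ± (ρ - σ) ≥ 0`.

Lower bound: in an eigenbasis of `ρ - σ`, `2‖ρ - σ‖₁ = ∑ |(ΔD + DΔ)ᵢᵢ| ≤ 2‖Δ‖₂‖D‖₂` by
Cauchy–Schwarz on the entries. Finally `‖D‖₂² ≤ ‖D‖₂² + ‖Δ‖₂² = 2(Tr ρ + Tr σ) = 4` by the
parallelogram law.
-/

open scoped MatrixOrder
open Unitary

namespace Matrix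

variable {n : Type*}

lemma abs_re_diag_le_of_posSemidef {Y Z : Matrix n n ℂ} (hadd : (Y + Z).PosSemidef)
    (hsub : (Y - Z).PosSemidef) (i : n) : |(Z i i).re| ≤ (Y i i).re := by
  have h₁ := (Complex.le_def.mp (hadd.diag_nonneg (i := i))).1
  have h₂ := (Complex.le_def.mp (hsub.diag_nonneg (i := i))).1
  simp only [add_apply, sub_apply, Complex.add_re, Complex.sub_re, Complex.zero_re] at h₁ h₂
  exact abs_le.mpr ⟨by linarith, by linarith⟩

variable [Fintype n] [DecidableEq n]

lemma trace_conjStarAlgAut (u : unitaryGroup n ℂ) (M : Matrix n n ℂ) :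
    (conjStarAlgAut ℂ _ u M).trace = M.trace := by
  rw [conjStarAlgAut_apply, trace_mul_cycle, coe_star_mul_self, one_mul]

lemma PosSemidef.conjStarAlgAut {M : Matrix n n ℂ} (hM : M.PosSemidef) (u : unitaryGroup n ℂ) :
    (conjStarAlgAut ℂ _ u M).PosSemidef :=
  (map_nonneg _ hM.nonneg).posSemidef

lemma IsHermitian.trace_cfc {A : Matrix n n ℂ} (hA : A.IsHermitian) (f : ℝ → ℝ) :
    (cfc f A).trace = ∑ i, (f (hA.eigenvalues i) : ℂ) := by
  rw [hA.cfc_eq, IsHermitian.cfc, trace_conjStarAlgAut, trace_diagonal]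
  rfl

end Matrix

section

variable {n : Type*} [Fintype n] [DecidableEq n]

lemma msqrt_posSemidef (A : Matrix n n ℂ) : (msqrt A).PosSemidef :=
  (cfc_nonneg fun x _ => Real.sqrt_nonneg x).posSemidef

lemma msqrt_mul_self {A : Matrix n n ℂ} (hA : A.PosSemidef) : msqrt A * msqrt A = A := by
  rw [msqrt, ← cfc_mul Real.sqrt Real.sqrt A]
  refine (cfc_congr fun x hx => Real.mul_self_sqrt ?_).trans (cfc_id' ℝ A)
  exact spectrum_nonneg_of_nonneg hA.nonneg hx

lemma traceNorm_eq_re_trace_cfc_abs {X : Matrix n n ℂ} (hX : X.IsHermitian) :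
    traceNorm X = (cfc (fun t : ℝ => |t|) X).trace.re := by
  have hsq : Xᴴ * X = X ^ 2 := by rw [hX.eq, sq]
  rw [traceNorm, hsq, msqrt, ← cfc_comp_pow Real.sqrt 2 X,
    cfc_congr fun x _ => Real.sqrt_sq_eq_abs x]

lemma traceNorm_eq_sum_abs_eigenvalues {X : Matrix n n ℂ} (hX : X.IsHermitian) :
    traceNorm X = ∑ i, |hX.eigenvalues i| := by
  simp [traceNorm_eq_re_trace_cfc_abs hX, hX.trace_cfc]

lemma sum_abs_re_diag_conjStarAlgAut_le_traceNorm {X : Matrix n n ℂ} (hX : X.IsHermitian)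
    (u : unitaryGroup n ℂ) : ∑ i, |(conjStarAlgAut ℂ _ u X i i).re| ≤ traceNorm X := by
  set absX := cfc (fun t : ℝ => |t|) X
  have hadd : (absX + X).PosSemidef := by
    have e : cfc (fun t : ℝ => |t| + t) X = absX + X := by rw [cfc_add .., cfc_id' ℝ X]
    exact e ▸ (cfc_nonneg fun t _ => by linarith [neg_abs_le t]).posSemidef
  have hsub : (absX - X).PosSemidef := by
    have e : cfc (fun t : ℝ => |t| - t) X = absX - X := by rw [cfc_sub .., cfc_id' ℝ X]
    exact e ▸ (cfc_nonneg fun t _ => by linarith [le_abs_self t]).posSemidef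
  set φ := conjStarAlgAut ℂ _ u
  calc ∑ i, |(φ X i i).re| ≤ ∑ i, (φ absX i i).re := by
        refine Finset.sum_le_sum fun i _ => abs_re_diag_le_of_posSemidef ?_ ?_ i
        · simpa only [map_add] using hadd.conjStarAlgAut u
        · simpa only [map_sub] using hsub.conjStarAlgAut u
    _ = traceNorm X := by
        rw [traceNorm_eq_re_trace_cfc_abs hX, ← trace_conjStarAlgAut u, trace, Complex.re_sum]
        rfl

lemma hsNorm_sq (M : Matrix n n ℂ) : hsNorm M ^ 2 = (Mᴴ * M).trace.re :=
  Real.sq_sqrt (Complex.le_def.mp (posSemidef_conjTranspose_mul_self M).trace_nonneg).1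

lemma hsNorm_eq_sqrt_sum_norm_sq (M : Matrix n n ℂ) :
    hsNorm M = √(∑ p : n × n, ‖M p.1 p.2‖ ^ 2) := by
  rw [hsNorm, Fintype.sum_prod_type, Finset.sum_comm]
  simp [trace, mul_apply, Complex.conj_mul', Complex.re_sum, ← Complex.ofReal_pow]

lemma hsNorm_conjStarAlgAut (u : unitaryGroup n ℂ) (M : Matrix n n ℂ) :
    hsNorm (conjStarAlgAut ℂ _ u M) = hsNorm M := by
  rw [hsNorm, hsNorm, ← star_eq_conjTranspose, ← map_star, ← map_mul, trace_conjStarAlgAut,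
    star_eq_conjTranspose]

lemma hsNorm_add_sq_add_hsNorm_sub_sq (A B : Matrix n n ℂ) :
    hsNorm (A + B) ^ 2 + hsNorm (A - B) ^ 2 = 2 * (hsNorm A ^ 2 + hsNorm B ^ 2) := by
  simp only [hsNorm_sq, conjTranspose_add, conjTranspose_sub, add_mul, mul_add, sub_mul, mul_sub,
    trace_add, trace_sub, Complex.add_re, Complex.sub_re]
  ring

lemma hsNorm_msqrt_sq {A : Matrix n n ℂ} (hA : A.PosSemidef) :
    hsNorm (msqrt A) ^ 2 = A.trace.re := by
  rw [hsNorm_sq, (msqrt_posSemidef A).isHermitian.eq, msqrt_mul_self hA]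

lemma sum_norm_diag_mul_le_hsNorm_mul_hsNorm (P Q : Matrix n n ℂ) :
    ∑ i, ‖(P * Q) i i‖ ≤ hsNorm P * hsNorm Q := by
  have hQ : hsNorm Q = √(∑ p : n × n, ‖Q p.2 p.1‖ ^ 2) := by
    rw [hsNorm_eq_sqrt_sum_norm_sq, Fintype.sum_prod_type, Fintype.sum_prod_type, Finset.sum_comm]
  calc ∑ i, ‖(P * Q) i i‖ ≤ ∑ p : n × n, ‖P p.1 p.2‖ * ‖Q p.2 p.1‖ := by
        rw [Fintype.sum_prod_type]
        refine Finset.sum_le_sum fun i _ => (norm_sum_le _ _).trans_eq ?_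
        simp only [norm_mul]
    _ ≤ hsNorm P * hsNorm Q := by
        rw [hsNorm_eq_sqrt_sum_norm_sq, hQ]
        exact Real.sum_mul_le_sqrt_mul_sqrt _ _ _

lemma re_trace_mul_self_le_traceNorm {Δ D X : Matrix n n ℂ} (hΔ : Δ.IsHermitian)
    (hX : X.IsHermitian) (hadd : (D + Δ).PosSemidef) (hsub : (D - Δ).PosSemidef)
    (hanticomm : Δ * D + D * Δ = 2 • X) : (Δ * Δ).trace.re ≤ traceNorm X := by
  set u := star hΔ.eigenvectorUnitary
  set φ := conjStarAlgAut ℂ _ u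
  set ev := hΔ.eigenvalues
  have hdiag : φ Δ = diagonal fun i => (ev i : ℂ) := hΔ.conjStarAlgAut_star_eigenvectorUnitary
  have hD : ∀ i, |ev i| ≤ (φ D i i).re := fun i => by
    have h := abs_re_diag_le_of_posSemidef (Y := φ D) (Z := φ Δ)
      (by rw [← map_add]; exact hadd.conjStarAlgAut u)
      (by rw [← map_sub]; exact hsub.conjStarAlgAut u) i
    rwa [hdiag, diagonal_apply_eq, Complex.ofReal_re] at h
  have hanticomm' : φ Δ * φ D + φ D * φ Δ = 2 • φ X := by
    rw [← map_mul, ← map_mul, ← map_add, hanticomm, map_nsmul]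
  have hXD : ∀ i, φ X i i = ev i * φ D i i := fun i => by
    have h := congrArg (fun M => M i i) hanticomm'
    simp only [hdiag, Matrix.add_apply, diagonal_mul, mul_diagonal, Matrix.smul_apply,
      nsmul_eq_mul, Nat.cast_ofNat] at h
    linear_combination -h / 2
  calc (Δ * Δ).trace.re = ∑ i, ev i ^ 2 := by
        rw [← trace_conjStarAlgAut u, map_mul, hdiag, diagonal_mul_diagonal, trace_diagonal]
        simp [sq, Complex.re_sum]
    _ ≤ ∑ i, |(φ X i i).re| := Finset.sum_le_sum fun i _ => by
        rw [hXD i, Complex.re_ofReal_mul, abs_mul]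
        nlinarith [abs_nonneg (ev i), sq_abs (ev i), hD i, le_abs_self (φ D i i).re]
    _ ≤ traceNorm X := sum_abs_re_diag_conjStarAlgAut_le_traceNorm hX u

lemma traceNorm_le_hsNorm_mul_hsNorm {Δ D X : Matrix n n ℂ} (hX : X.IsHermitian)
    (hanticomm : Δ * D + D * Δ = 2 • X) : traceNorm X ≤ hsNorm Δ * hsNorm D := by
  set u := star hX.eigenvectorUnitary
  set φ := conjStarAlgAut ℂ _ u
  have hdiag : φ X = diagonal fun i => (hX.eigenvalues i : ℂ) :=
    hX.conjStarAlgAut_star_eigenvectorUnitary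
  have hanticomm' : φ Δ * φ D + φ D * φ Δ = 2 • φ X := by
    rw [← map_mul, ← map_mul, ← map_add, hanticomm, map_nsmul]
  have htwice : 2 * traceNorm X = ∑ i, ‖(φ Δ * φ D + φ D * φ Δ) i i‖ := by
    rw [hanticomm', hdiag, traceNorm_eq_sum_abs_eigenvalues hX, Finset.mul_sum]
    simp
  have hle : 2 * traceNorm X ≤ 2 * (hsNorm Δ * hsNorm D) :=
    calc 2 * traceNorm X
        ≤ ∑ i, ‖(φ Δ * φ D) i i‖ + ∑ i, ‖(φ D * φ Δ) i i‖ := by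
          rw [htwice, ← Finset.sum_add_distrib]
          exact Finset.sum_le_sum fun i _ => norm_add_le _ _
      _ ≤ hsNorm (φ Δ) * hsNorm (φ D) + hsNorm (φ D) * hsNorm (φ Δ) :=
          add_le_add (sum_norm_diag_mul_le_hsNorm_mul_hsNorm _ _)
            (sum_norm_diag_mul_le_hsNorm_mul_hsNorm _ _)
      _ = 2 * (hsNorm Δ * hsNorm D) := by
          rw [hsNorm_conjStarAlgAut, hsNorm_conjStarAlgAut]
          ring
  linarith

end

theorem hsNorm_traceNorm_sandwich {n : Type*} [Fintype n] [DecidableEq n]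
    (ρ σ : Matrix n n ℂ) (hρ : ρ.PosSemidef) (hσ : σ.PosSemidef)
    (hρ1 : ρ.trace = 1) (hσ1 : σ.trace = 1) :
    (1 / hsNorm (msqrt ρ + msqrt σ) ^ 2) * traceNorm (ρ - σ) ^ 2 ≤
        hsNorm (msqrt ρ - msqrt σ) ^ 2 ∧
      hsNorm (msqrt ρ - msqrt σ) ^ 2 ≤ traceNorm (ρ - σ) ∧
      (1 / 4) * traceNorm (ρ - σ) ^ 2 ≤ hsNorm (msqrt ρ - msqrt σ) ^ 2 := by
  have hAA := msqrt_mul_self hρ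
  have hBB := msqrt_mul_self hσ
  have hA := msqrt_posSemidef ρ
  have hB := msqrt_posSemidef σ
  set A := msqrt ρ
  set B := msqrt σ
  have hanticomm : (A - B) * (A + B) + (A + B) * (A - B) = 2 • (ρ - σ) := by
    rw [← hAA, ← hBB]
    noncomm_ring
  have hX : (ρ - σ).IsHermitian := hρ.isHermitian.sub hσ.isHermitian
  have hupper : hsNorm (A - B) ^ 2 ≤ traceNorm (ρ - σ) := by
    rw [hsNorm_sq, (hA.isHermitian.sub hB.isHermitian).eq]
    refine re_trace_mul_self_le_traceNorm (hA.isHermitian.sub hB.isHermitian) hX ?_ ?_ hanticomm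
    · convert hA.add hA using 1; abel
    · convert hB.add hB using 1; abel
  have hlower : traceNorm (ρ - σ) ^ 2 ≤ hsNorm (A - B) ^ 2 * hsNorm (A + B) ^ 2 := by
    rw [← mul_pow]
    exact pow_le_pow_left₀ ((sq_nonneg _).trans hupper)
      (traceNorm_le_hsNorm_mul_hsNorm hX hanticomm) 2
  have hsum : hsNorm (A + B) ^ 2 ≤ 4 := by
    have h := hsNorm_add_sq_add_hsNorm_sub_sq A B
    rw [hsNorm_msqrt_sq hρ, hsNorm_msqrt_sq hσ, hρ1, hσ1, Complex.one_re] at h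
    linarith [sq_nonneg (hsNorm (A - B))]
  refine ⟨?_, hupper, ?_⟩
  · rcases (sq_nonneg (hsNorm (A + B))).eq_or_lt with h0 | h0
    · rw [← h0, div_zero, zero_mul]
      positivity
    · rwa [one_div_mul_eq_div, div_le_iff₀ h0]
  · nlinarith [mul_le_mul_of_nonneg_left hsum (sq_nonneg (hsNorm (A - B)))]
end

section
/- (Audenaert's inequality at t = 1/2) For positive semi-definite matrices M and N, Tr(√M √N) ≥ (1/2)·Tr(M + N − |M − N|), where |A| = √(A†A). -/
open Matrix
open scoped ComplexOrder

/-!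
Write `A = √M`, `B = √N` and `C = A - B`. Since `Tr (A B) = Tr (B A)`, the claim is
`Tr C² ≤ Tr |A² - B²|` (Powers–Størmer). Let `S = sign C`, a self-adjoint contraction with
`S C = C S = |C|`. From `2 (A² - B²) = C (A + B) + (A + B) C` we get
`Tr S (A² - B²) = Tr |C| (A + B) = Tr C² + 2 Tr (C⁻ A + C⁺ B) ≥ Tr C²`.
Finally `Tr S D ≤ Tr |D|` for self-adjoint `D` and any self-adjoint contraction `S`, because
`|D| - S D = (1 - S) D⁺ + (1 + S) D⁻` and the trace of a product of two positive matrices is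
nonnegative.
-/

open scoped MatrixOrder

lemma Real.sign_mul_self (r : ℝ) : Real.sign r * r = |r| := by
  rcases lt_trichotomy r 0 with h | rfl | h
  · rw [Real.sign_of_neg h, abs_of_neg h]; ring
  · simp
  · rw [Real.sign_of_pos h, abs_of_pos h]; ring

namespace Matrix

lemma trace_sub_mul_sub {n R : Type*} [Fintype n] [CommRing R] (A B : Matrix n n R) :
    ((A - B) * (A - B)).trace = (A * A).trace + (B * B).trace - 2 * (A * B).trace := by
  rw [sub_mul, mul_sub, mul_sub, trace_sub, trace_sub, trace_sub, trace_mul_comm B A]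
  ring

variable {n 𝕜 : Type*} [Fintype n] [DecidableEq n] [RCLike 𝕜]

lemma trace_mul_nonneg {P Q : Matrix n n 𝕜} (hP : 0 ≤ P) (hQ : 0 ≤ Q) :
    0 ≤ (P * Q).trace := by
  have hconj : 0 ≤ CFC.sqrt P * Q * CFC.sqrt P := by
    simpa only [(CFC.sqrt_nonneg P).isSelfAdjoint.star_eq] using
      star_left_conjugate_nonneg hQ (CFC.sqrt P)
  calc 0 ≤ (CFC.sqrt P * Q * CFC.sqrt P).trace := hconj.posSemidef.trace_nonneg
    _ = (P * Q).trace := by rw [trace_mul_cycle, CFC.sqrt_mul_sqrt_self P]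

lemma re_trace_mul_nonneg {P Q : Matrix n n 𝕜} (hP : 0 ≤ P) (hQ : 0 ≤ Q) :
    0 ≤ RCLike.re (P * Q).trace :=
  (RCLike.nonneg_iff.mp (trace_mul_nonneg hP hQ)).1

lemma re_trace_mul_le_re_trace_abs {S D : Matrix n n 𝕜} (hS₁ : -1 ≤ S) (hS₂ : S ≤ 1)
    (hD : IsSelfAdjoint D) : RCLike.re (S * D).trace ≤ RCLike.re (CFC.abs D).trace := by
  have hdecomp : CFC.abs D - S * D = (1 - S) * D⁺ + (1 + S) * D⁻ := by
    calc CFC.abs D - S * D = (D⁺ + D⁻) - S * (D⁺ - D⁻) := by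
          rw [CFC.posPart_add_negPart D, CFC.posPart_sub_negPart D]
      _ = (1 - S) * D⁺ + (1 + S) * D⁻ := by noncomm_ring
  have h₁ := re_trace_mul_nonneg (sub_nonneg.mpr hS₂) (CFC.posPart_nonneg D)
  have h₂ := re_trace_mul_nonneg (neg_le_iff_add_nonneg'.mp hS₁) (CFC.negPart_nonneg D)
  have h := congrArg (fun X => RCLike.re X.trace) hdecomp
  simp only [trace_sub, trace_add, map_sub, map_add] at h
  linarith

lemma cfc_sign_le_one (C : Matrix n n 𝕜) : cfc Real.sign C ≤ 1 := by
  refine cfc_le_one _ C fun r _ => ?_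
  rcases Real.sign_apply_eq r with h | h | h <;> rw [h] <;> norm_num

lemma neg_one_le_cfc_sign {C : Matrix n n 𝕜} (hC : IsSelfAdjoint C) :
    -1 ≤ cfc Real.sign C := by
  have h := algebraMap_le_cfc Real.sign (-1) C (fun r _ => ?_)
    (C.finite_real_spectrum.continuousOn _)
  · simpa using h
  rcases Real.sign_apply_eq r with h | h | h <;> rw [h] <;> norm_num

lemma cfc_sign_mul_self {C : Matrix n n 𝕜} (hC : IsSelfAdjoint C) :
    cfc Real.sign C * C = CFC.abs C := by
  conv_lhs => enter [2]; rw [← cfc_id' ℝ C]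
  rw [← cfc_mul Real.sign _ C (C.finite_real_spectrum.continuousOn _), CFC.abs_eq_cfc_norm C]
  exact cfc_congr fun r _ => Real.sign_mul_self r

lemma self_mul_cfc_sign {C : Matrix n n 𝕜} (hC : IsSelfAdjoint C) :
    C * cfc Real.sign C = CFC.abs C := by
  conv_lhs => enter [1]; rw [← cfc_id' ℝ C]
  rw [← cfc_mul _ Real.sign C (C.finite_real_spectrum.continuousOn _)
    (C.finite_real_spectrum.continuousOn _), CFC.abs_eq_cfc_norm C]
  exact cfc_congr fun r _ => by rw [mul_comm]; exact Real.sign_mul_self r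

lemma trace_cfc_sign_sub_mul_mul_self_sub_mul_self {A B : Matrix n n 𝕜} (hA : IsSelfAdjoint A)
    (hB : IsSelfAdjoint B) :
    (cfc Real.sign (A - B) * (A * A - B * B)).trace = (CFC.abs (A - B) * (A + B)).trace := by
  set C := A - B
  set S := cfc Real.sign C
  have hC : IsSelfAdjoint C := hA.sub hB
  have hanti : (A * A - B * B) + (A * A - B * B) = C * (A + B) + (A + B) * C := by
    simp only [C]; noncomm_ring
  have h : (S * (A * A - B * B)).trace + (S * (A * A - B * B)).trace
      = (CFC.abs C * (A + B)).trace + (CFC.abs C * (A + B)).trace := by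
    rw [← trace_add, ← mul_add, hanti, mul_add, trace_add, ← mul_assoc, cfc_sign_mul_self hC,
      ← mul_assoc, trace_mul_cycle, self_mul_cfc_sign hC]
  linear_combination h / 2

lemma re_trace_sub_mul_sub_le_re_trace_abs_sub_mul_add {A B : Matrix n n 𝕜} (hA : 0 ≤ A)
    (hB : 0 ≤ B) :
    RCLike.re ((A - B) * (A - B)).trace ≤ RCLike.re (CFC.abs (A - B) * (A + B)).trace := by
  set C := A - B
  have hC : IsSelfAdjoint C := hA.isSelfAdjoint.sub hB.isSelfAdjoint
  have hdecomp : CFC.abs C * (A + B) = C * C + (C⁻ * A + C⁺ * B) + (C⁻ * A + C⁺ * B) := by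
    calc CFC.abs C * (A + B) = (C⁺ + C⁻) * (A + B) := by rw [CFC.posPart_add_negPart C]
      _ = (C⁺ - C⁻) * (A - B) + (C⁻ * A + C⁺ * B) + (C⁻ * A + C⁺ * B) := by noncomm_ring
      _ = C * C + (C⁻ * A + C⁺ * B) + (C⁻ * A + C⁺ * B) := by rw [CFC.posPart_sub_negPart C]
  have h₁ := re_trace_mul_nonneg (CFC.negPart_nonneg C) hA
  have h₂ := re_trace_mul_nonneg (CFC.posPart_nonneg C) hB
  rw [hdecomp]
  simp only [trace_add, map_add]
  linarith

theorem re_trace_sub_mul_sub_le_re_trace_abs_mul_self_sub_mul_self {A B : Matrix n n 𝕜}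
    (hA : 0 ≤ A) (hB : 0 ≤ B) :
    RCLike.re ((A - B) * (A - B)).trace ≤ RCLike.re (CFC.abs (A * A - B * B)).trace := by
  have hA' := hA.isSelfAdjoint
  have hB' := hB.isSelfAdjoint
  have hD : IsSelfAdjoint (A * A - B * B) := by simpa only [sq] using (hA'.pow 2).sub (hB'.pow 2)
  calc RCLike.re ((A - B) * (A - B)).trace
      ≤ RCLike.re (CFC.abs (A - B) * (A + B)).trace :=
        re_trace_sub_mul_sub_le_re_trace_abs_sub_mul_add hA hB
    _ = RCLike.re (cfc Real.sign (A - B) * (A * A - B * B)).trace := by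
        rw [trace_cfc_sign_sub_mul_mul_self_sub_mul_self hA' hB']
    _ ≤ RCLike.re (CFC.abs (A * A - B * B)).trace :=
        re_trace_mul_le_re_trace_abs (neg_one_le_cfc_sign (hA'.sub hB')) (cfc_sign_le_one _) hD

end Matrix

section msqrt

variable {n : Type*} [Fintype n] [DecidableEq n]

lemma msqrt_eq_sqrt {A : Matrix n n ℂ} (hA : 0 ≤ A) : msqrt A = CFC.sqrt A := by
  rw [msqrt, CFC.sqrt_eq_real_sqrt A hA, cfcₙ_eq_cfc]

lemma msqrt_conjTranspose_mul_self (A : Matrix n n ℂ) : msqrt (Aᴴ * A) = CFC.abs A := by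
  rw [msqrt_eq_sqrt (posSemidef_conjTranspose_mul_self A).nonneg, CFC.abs, star_eq_conjTranspose]

end msqrt

theorem audenaert_half {n : Type*} [Fintype n] [DecidableEq n]
    (M N : Matrix n n ℂ) (hM : M.PosSemidef) (hN : N.PosSemidef) :
    (msqrt M * msqrt N).trace.re ≥
      (1 / 2) * (M.trace.re + N.trace.re - (msqrt ((M - N)ᴴ * (M - N))).trace.re) := by
  rw [msqrt_conjTranspose_mul_self, msqrt_eq_sqrt hM.nonneg, msqrt_eq_sqrt hN.nonneg]
  have key := Matrix.re_trace_sub_mul_sub_le_re_trace_abs_mul_self_sub_mul_self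
    (CFC.sqrt_nonneg M) (CFC.sqrt_nonneg N)
  rw [CFC.sqrt_mul_sqrt_self M, CFC.sqrt_mul_sqrt_self N, Matrix.trace_sub_mul_sub,
    CFC.sqrt_mul_sqrt_self M, CFC.sqrt_mul_sqrt_self N] at key
  simp only [RCLike.re_to_complex, Complex.sub_re, Complex.add_re, Complex.mul_re, Complex.re_ofNat,
    Complex.im_ofNat, zero_mul, sub_zero] at key
  linarith
end

section
/- For density matrices ρ, σ with supp(ρ) ⊆ supp(σ) and a quantum channel Φ, S(ρ‖σ) − S(Φ(ρ)‖Φ(σ)) ≥ −2 log Tr(√ρ · √(exp(log σ + Φ*(log Φ(ρ)) − Φ*(log Φ(σ))))), where Φ* is the adjoint of Φ with respect to the Hilbert–Schmidt inner product. -/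
open Matrix
open scoped ComplexOrder

/-- quantum relative entropy S(ρ‖σ) = Tr(ρ(log ρ − log σ)) -/
noncomputable def relEnt {n : Type*} [Fintype n] [DecidableEq n]
    (ρ σ : Matrix n n ℂ) : ℝ :=
  (ρ * (matLog ρ - matLog σ)).trace.re

/-!
Writing `H = log σ + Φ*(log Φ(ρ)) - Φ*(log Φ(σ))`, duality `Tr(ρ Φ*(X)) = Tr(Φ(ρ) X)` turns the
left-hand side into `Tr(ρ log ρ) - Tr(ρ H)`. In eigenbases `ρ = ∑ pᵢ |uᵢ⟩⟨uᵢ|` and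
`H = ∑ hⱼ |vⱼ⟩⟨vⱼ|`, the three traces involved are expectations under the probability weights
`pᵢ |⟨uᵢ, vⱼ⟩|²`, and the inequality is Jensen's inequality for the concave logarithm at the points
`√(exp hⱼ / pᵢ)`.
-/

open Real in
lemma neg_two_mul_log_sum_le {ι κ : Type*} [Fintype ι] [Fintype κ] (p : ι → ℝ) (h : κ → ℝ)
    (c : ι → κ → ℝ) (hp : ∀ i, 0 < p i) (hc : ∀ i j, 0 ≤ c i j) (hc1 : ∀ i, ∑ j, c i j = 1)
    (hp1 : ∑ i, p i = 1) :
    -2 * log (∑ i, ∑ j, √(p i) * √(exp (h j)) * c i j) ≤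
      ∑ i, p i * log (p i) - ∑ i, ∑ j, p i * h j * c i j := by
  set w : ι × κ → ℝ := fun q => p q.1 * c q.1 q.2
  set x : ι × κ → ℝ := fun q => √(exp (h q.2)) / √(p q.1)
  have hw0 : ∀ q ∈ Finset.univ, 0 ≤ w q := fun q _ => mul_nonneg (hp q.1).le (hc q.1 q.2)
  have hw1 : ∑ q, w q = 1 := by
    simp only [w, Fintype.sum_prod_type, ← Finset.mul_sum, hc1, mul_one, hp1]
  have hx0 : ∀ q ∈ Finset.univ, x q ∈ Set.Ioi 0 := fun q _ =>
    div_pos (sqrt_pos.2 (exp_pos _)) (sqrt_pos.2 (hp q.1))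
  have hmean : ∑ q, w q • x q = ∑ i, ∑ j, √(p i) * √(exp (h j)) * c i j := by
    refine (Fintype.sum_prod_type _).trans <| Finset.sum_congr rfl fun i _ =>
      Finset.sum_congr rfl fun j _ => ?_
    have hpi : √(p i) ≠ 0 := (sqrt_pos.2 (hp i)).ne'
    simp only [w, x, smul_eq_mul]
    field_simp
    rw [sq_sqrt (hp i).le]
    ring
  have hlog : ∀ q, log (x q) = h q.2 / 2 - log (p q.1) / 2 := fun q => by
    rw [log_div (sqrt_pos.2 (exp_pos _)).ne' (sqrt_pos.2 (hp q.1)).ne', log_sqrt (exp_pos _).le,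
      log_sqrt (hp q.1).le, log_exp]
  have hlogmean : ∑ q, w q • log (x q) =
      (∑ i, ∑ j, p i * h j * c i j - ∑ i, p i * log (p i)) / 2 := by
    have hent : ∑ i, p i * log (p i) = ∑ i, ∑ j, p i * log (p i) * c i j := by
      simp only [← Finset.mul_sum, hc1, mul_one]
    rw [hent, ← Finset.sum_sub_distrib, Finset.sum_div, Fintype.sum_prod_type]
    refine Finset.sum_congr rfl fun i _ => ?_
    rw [← Finset.sum_sub_distrib, Finset.sum_div]
    refine Finset.sum_congr rfl fun j _ => ?_
    simp only [w, smul_eq_mul, hlog]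
    ring
  have jensen := strictConcaveOn_log_Ioi.concaveOn.le_map_sum hw0 hw1 hx0
  rw [hmean, hlogmean] at jensen
  linarith

section MatrixFunctions

variable {n : Type*} [Fintype n] [DecidableEq n]

lemma isHermitian_matLog (A : Matrix n n ℂ) : (matLog A).IsHermitian :=
  cfc_predicate Real.log A

-- `NormedSpace.exp` only depends on the topology, so any algebra norm may be used here.
open scoped Matrix.Norms.L2Operator in
lemma mexp_eq_cfc {A : Matrix n n ℂ} (hA : A.IsHermitian) : mexp A = cfc Real.exp A :=
  (CFC.real_exp_eq_normedSpace_exp hA.isSelfAdjoint).symm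

lemma Matrix.trace_diagonal_mul_mul_diagonal_mul_star (d e : n → ℂ) (W : Matrix n n ℂ) :
    (diagonal d * (W * (diagonal e * star W))).trace =
      ∑ i, ∑ j, d i * e j * ((‖W i j‖ ^ 2 : ℝ) : ℂ) := by
  simp only [trace, diag, diagonal_mul]
  simp only [mul_apply (M := W), diagonal_mul, star_apply, Finset.mul_sum]
  refine Finset.sum_congr rfl fun i _ => Finset.sum_congr rfl fun j _ => ?_
  rw [Complex.ofReal_pow, ← Complex.mul_conj', Complex.star_def]
  ring

namespace Matrix.IsHermitian

variable {A B : Matrix n n ℂ} (hA : A.IsHermitian) (hB : B.IsHermitian)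

noncomputable def eigenbasisChange : Matrix n n ℂ :=
  star (hA.eigenvectorUnitary : Matrix n n ℂ) * hB.eigenvectorUnitary

noncomputable def eigenOverlap (i j : n) : ℝ :=
  ‖hA.eigenbasisChange hB i j‖ ^ 2

lemma eigenbasisChange_mem_unitary : hA.eigenbasisChange hB ∈ unitary (Matrix n n ℂ) :=
  mul_mem (Unitary.star_mem hA.eigenvectorUnitary.2) hB.eigenvectorUnitary.2

lemma sum_eigenOverlap (i : n) : ∑ j, hA.eigenOverlap hB i j = 1 := by
  have := congrArg (fun M : Matrix n n ℂ => M i i)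
    (Unitary.mul_star_self_of_mem (hA.eigenbasisChange_mem_unitary hB))
  simp only [mul_apply, star_apply, Complex.star_def, Complex.mul_conj', one_apply_eq] at this
  exact_mod_cast this

lemma trace_cfc_s15 (f : ℝ → ℝ) : (cfc f A).trace = ((∑ i, f (hA.eigenvalues i) : ℝ) : ℂ) := by
  rw [hA.cfc_eq, IsHermitian.cfc, Unitary.conjStarAlgAut_apply, trace_mul_cycle,
    Unitary.coe_star_mul_self, one_mul, trace_diagonal, Complex.ofReal_sum]
  rfl

lemma trace_cfc_mul_cfc (f g : ℝ → ℝ) :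
    (cfc f A * cfc g B).trace = ((∑ i, ∑ j,
      f (hA.eigenvalues i) * g (hB.eigenvalues j) * hA.eigenOverlap hB i j : ℝ) : ℂ) := by
  have hcycle : (cfc f A * cfc g B).trace = (diagonal (RCLike.ofReal ∘ f ∘ hA.eigenvalues) *
      (hA.eigenbasisChange hB * (diagonal (RCLike.ofReal ∘ g ∘ hB.eigenvalues) *
        star (hA.eigenbasisChange hB)))).trace := by
    rw [hA.cfc_eq, hB.cfc_eq, IsHermitian.cfc, IsHermitian.cfc, Unitary.conjStarAlgAut_apply,
      Unitary.conjStarAlgAut_apply, eigenbasisChange, star_mul, star_star]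
    simp only [Matrix.mul_assoc]
    rw [trace_mul_comm]
    simp only [Matrix.mul_assoc]
  rw [hcycle, trace_diagonal_mul_mul_diagonal_mul_star]
  simp only [Function.comp_apply, eigenOverlap, Complex.ofReal_sum, Complex.ofReal_mul]
  rfl

end Matrix.IsHermitian

lemma neg_two_mul_log_trace_msqrt_mul_msqrt_mexp_le {ρ H : Matrix n n ℂ} (hρ : ρ.PosDef)
    (hρ1 : ρ.trace = 1) (hH : H.IsHermitian) :
    -2 * Real.log (msqrt ρ * msqrt (mexp H)).trace.re ≤
      (ρ * matLog ρ).trace.re - (ρ * H).trace.re := by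
  have hρH := hρ.isHermitian
  have hent :
      (ρ * matLog ρ).trace.re = ∑ i, hρH.eigenvalues i * Real.log (hρH.eigenvalues i) := by
    have hmul : ρ * matLog ρ = cfc (fun x => x * Real.log x) ρ := by
      rw [cfc_mul (fun x => x) _ ρ continuousOn_id (ρ.finite_real_spectrum.continuousOn _),
        cfc_id' ℝ ρ]
      rfl
    rw [hmul, hρH.trace_cfc_s15, Complex.ofReal_re]
  have hcross : (ρ * H).trace.re = ∑ i, ∑ j,
      hρH.eigenvalues i * hH.eigenvalues j * hρH.eigenOverlap hH i j := by
    conv_lhs => rw [← cfc_id' ℝ ρ, ← cfc_id' ℝ H]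
    rw [hρH.trace_cfc_mul_cfc hH, Complex.ofReal_re]
  have hfid : (msqrt ρ * msqrt (mexp H)).trace.re = ∑ i, ∑ j, √(hρH.eigenvalues i) *
      √(Real.exp (hH.eigenvalues j)) * hρH.eigenOverlap hH i j := by
    rw [msqrt, msqrt, mexp_eq_cfc hH, ← cfc_comp Real.sqrt Real.exp H, hρH.trace_cfc_mul_cfc hH,
      Complex.ofReal_re]
    rfl
  have hp1 : ∑ i, hρH.eigenvalues i = 1 := by
    have := hρH.trace_cfc_s15 id
    rw [cfc_id ℝ ρ, hρ1] at this
    exact_mod_cast this.symm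
  rw [hent, hcross, hfid]
  exact neg_two_mul_log_sum_le _ _ _ hρ.eigenvalues_pos (fun _ _ => sq_nonneg _)
    (hρH.sum_eigenOverlap hH) hp1

end MatrixFunctions

section Channel

variable {n ι : Type*} [Fintype n] [Fintype ι] {K : ι → Matrix n n ℂ}
  {Φ Φs : Matrix n n ℂ → Matrix n n ℂ}

lemma adjoint_eq_sum_kraus (hΦ : ∀ X, Φ X = ∑ i, K i * X * (K i)ᴴ)
    (hΦs : ∀ X Y, (Φs X * Y).trace = (X * Φ Y).trace) (X : Matrix n n ℂ) :
    Φs X = ∑ i, (K i)ᴴ * X * K i := by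
  refine ext_iff_trace_mul_right.2 fun Y => ?_
  rw [hΦs, hΦ, Matrix.mul_sum, Finset.sum_mul, trace_sum, trace_sum]
  refine Finset.sum_congr rfl fun i _ => ?_
  simp only [Matrix.mul_assoc]
  rw [trace_mul_comm (K i)ᴴ]
  simp only [Matrix.mul_assoc]

lemma isHermitian_adjoint_of_kraus (hΦ : ∀ X, Φ X = ∑ i, K i * X * (K i)ᴴ)
    (hΦs : ∀ X Y, (Φs X * Y).trace = (X * Φ Y).trace) {X : Matrix n n ℂ} (hX : X.IsHermitian) :
    (Φs X).IsHermitian := by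
  rw [adjoint_eq_sum_kraus hΦ hΦs]
  exact isSelfAdjoint_sum _ fun i _ => isHermitian_conjTranspose_mul_mul (K i) hX

lemma relEnt_sub_relEnt_eq [DecidableEq n]
    (hΦs : ∀ X Y, (Φs X * Y).trace = (X * Φ Y).trace) (ρ σ : Matrix n n ℂ) :
    relEnt ρ σ - relEnt (Φ ρ) (Φ σ) = (ρ * matLog ρ).trace.re -
      (ρ * (matLog σ + Φs (matLog (Φ ρ)) - Φs (matLog (Φ σ)))).trace.re := by
  have hdual : ∀ X, (ρ * Φs X).trace = (Φ ρ * X).trace := fun X => by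
    rw [trace_mul_comm, hΦs, trace_mul_comm]
  simp only [relEnt, Matrix.mul_sub, Matrix.mul_add, trace_sub, trace_add, hdual, Complex.sub_re,
    Complex.add_re]
  ring

end Channel

theorem relEnt_diff_lower_bound_general {n ι : Type*} [Fintype n] [DecidableEq n] [Fintype ι]
    (ρ σ : Matrix n n ℂ) (hρ : ρ.PosDef)
    (hρ1 : ρ.trace = 1)
    (K : ι → Matrix n n ℂ)
    (Φ : Matrix n n ℂ → Matrix n n ℂ) (hΦ : ∀ X, Φ X = ∑ i, K i * X * (K i)ᴴ)
    (Φs : Matrix n n ℂ → Matrix n n ℂ)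
    (hΦs : ∀ X Y, (Φs X * Y).trace = (X * Φ Y).trace) :
    relEnt ρ σ - relEnt (Φ ρ) (Φ σ) ≥
      -2 * Real.log ((msqrt ρ *
        msqrt (mexp (matLog σ + Φs (matLog (Φ ρ)) - Φs (matLog (Φ σ))))).trace.re) := by
  have hH : (matLog σ + Φs (matLog (Φ ρ)) - Φs (matLog (Φ σ))).IsHermitian :=
    ((isHermitian_matLog σ).add (isHermitian_adjoint_of_kraus hΦ hΦs (isHermitian_matLog _))).sub
      (isHermitian_adjoint_of_kraus hΦ hΦs (isHermitian_matLog _))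
  rw [relEnt_sub_relEnt_eq hΦs, ge_iff_le]
  exact neg_two_mul_log_trace_msqrt_mul_msqrt_mexp_le hρ hρ1 hH

theorem relEnt_diff_lower_bound {n ι : Type*} [Fintype n] [DecidableEq n] [Fintype ι]
    (ρ σ : Matrix n n ℂ) (hρ : ρ.PosDef) (hσ : σ.PosDef)
    (hρ1 : ρ.trace = 1) (hσ1 : σ.trace = 1)
    (K : ι → Matrix n n ℂ) (hK : ∑ i, (K i)ᴴ * K i = 1)
    (Φ : Matrix n n ℂ → Matrix n n ℂ) (hΦ : ∀ X, Φ X = ∑ i, K i * X * (K i)ᴴ)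
    (Φs : Matrix n n ℂ → Matrix n n ℂ)
    (hΦs : ∀ X Y, (Φs X * Y).trace = (X * Φ Y).trace)
    (hΦρ : (Φ ρ).PosDef) (hΦσ : (Φ σ).PosDef) :
    relEnt ρ σ - relEnt (Φ ρ) (Φ σ) ≥
      -2 * Real.log ((msqrt ρ *
        msqrt (mexp (matLog σ + Φs (matLog (Φ ρ)) - Φs (matLog (Φ σ))))).trace.re) :=
  relEnt_diff_lower_bound_general ρ σ hρ hρ1 K Φ hΦ Φs hΦs
end

section
/- For non-singular density matrices ρ, σ on a finite-dimensional Hilbert space, the fidelity satisfies F(ρ,σ) ≥ Tr(√ρ)·exp(−(1/2)S(ρ) − (1/2)H(λ↓(ρ)‖λ↑(σ))), where λ↓(ρ) is the eigenvalue vector of ρ in decreasing order, λ↑(σ) that of σ in increasing order, S is von Neumann entropy, and H(p‖q) = Σ_j p_j log(p_j/q_j) is classical relative entropy. -/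
open Matrix
open scoped ComplexOrder

/-- fidelity F(ρ,σ) = ‖√ρ √σ‖₁ -/
noncomputable def fidelity {n : Type*} [Fintype n] [DecidableEq n]
    (ρ σ : Matrix n n ℂ) : ℝ :=
  traceNorm (msqrt ρ * msqrt σ)

/-!
Diagonalize `ρ` and `σ` with eigenvalues `α`, `β` and eigenbases `u`, `v`. The trace norm dominates
the real part of the trace (polar decomposition), so
`F(ρ,σ) ≥ Re Tr √ρ√σ = ∑ᵢⱼ √αᵢ √βⱼ |⟨uᵢ, vⱼ⟩|²`, and the overlap matrix `|⟨uᵢ, vⱼ⟩|²` is doubly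
stochastic. By Birkhoff's theorem the sum is at least `∑ᵢ √αᵢ √β_{π i}` for some permutation `π`,
and by the rearrangement inequality at least `∑ⱼ √pⱼ √qⱼ` with `p = λ↓(ρ)`, `q = λ↑(σ)`.
With the weights `wⱼ = √pⱼ / ∑ₖ √pₖ`, Jensen's inequality for `exp` gives
`∑ⱼ √pⱼ √qⱼ ≥ (∑ₖ √pₖ) exp (½ ∑ⱼ wⱼ log qⱼ)`, and replacing `w` by `p` only lowers the exponent:
`w - p` is negative exactly where `p` is large, i.e. where `log q` is small. Finally
`½ ∑ⱼ pⱼ log qⱼ = -½ S(ρ) - ½ H(p‖q)`.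
-/

open scoped MatrixOrder

section MatrixAnalysis

variable {n : Type*} [Fintype n] [DecidableEq n]

lemma isUnit_msqrt {A : Matrix n n ℂ} (hA : A.PosDef) : IsUnit (msqrt A) := by
  rw [msqrt_eq_sqrt hA.posSemidef.nonneg, CFC.isUnit_sqrt_iff A hA.posSemidef.nonneg]
  exact hA.isUnit

lemma traceNorm_eq_re_trace_abs (X : Matrix n n ℂ) : traceNorm X = (CFC.abs X).trace.re := by
  rw [traceNorm, ← star_eq_conjTranspose, msqrt_eq_sqrt (star_mul_self_nonneg X), CFC.abs]

lemma trace_cfc {A : Matrix n n ℂ} (hA : A.IsHermitian) (f : ℝ → ℝ) :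
    (cfc f A).trace = ∑ i, (f (hA.eigenvalues i) : ℂ) := by
  rw [hA.cfc_eq, IsHermitian.cfc, Unitary.conjStarAlgAut_apply, trace_mul_cycle,
    Unitary.coe_star_mul_self, one_mul, trace_diagonal]
  rfl

lemma re_trace_msqrt {A : Matrix n n ℂ} (hA : A.IsHermitian) :
    (msqrt A).trace.re = ∑ i, √(hA.eigenvalues i) := by
  rw [msqrt, trace_cfc hA]
  norm_cast

lemma sum_eigenvalues_eq_one {A : Matrix n n ℂ} (hA : A.IsHermitian) (h : A.trace = 1) :
    ∑ i, hA.eigenvalues i = 1 := by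
  rw [← Complex.ofReal_inj, Complex.ofReal_sum, Complex.ofReal_one, ← h]
  exact hA.trace_eq_sum_eigenvalues.symm

lemma vnEnt_eq_neg_sum {A : Matrix n n ℂ} (hA : A.IsHermitian) :
    vnEnt A = -∑ i, hA.eigenvalues i * Real.log (hA.eigenvalues i) := by
  rw [vnEnt, matLog]
  nth_rw 1 [← cfc_id' ℝ A]
  rw [← cfc_mul _ _ A (by fun_prop) (A.finite_real_spectrum.continuousOn _), trace_cfc hA]
  norm_cast

lemma re_trace_cfc_mul_cfc {A B : Matrix n n ℂ} (hA : A.IsHermitian) (hB : B.IsHermitian)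
    (f g : ℝ → ℝ) :
    (cfc f A * cfc g B).trace.re = ∑ i, ∑ j, f (hA.eigenvalues i) * g (hB.eigenvalues j) *
      Complex.normSq ((star (hA.eigenvectorUnitary : Matrix n n ℂ) * hB.eigenvectorUnitary) i j) := by
  set W := star (hA.eigenvectorUnitary : Matrix n n ℂ) * hB.eigenvectorUnitary
  have hcycle : (cfc f A * cfc g B).trace = (diagonal (fun i => (f (hA.eigenvalues i) : ℂ)) * W *
      diagonal (fun j => (g (hB.eigenvalues j) : ℂ)) * star W).trace := by
    rw [hA.cfc_eq, hB.cfc_eq, IsHermitian.cfc, IsHermitian.cfc, Unitary.conjStarAlgAut_apply,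
      Unitary.conjStarAlgAut_apply]
    simp only [mul_assoc]
    rw [trace_mul_comm]
    simp only [W, star_mul, star_star, mul_assoc]
    rfl
  rw [hcycle, trace, Complex.re_sum]
  refine Finset.sum_congr rfl fun i _ => ?_
  rw [diag, mul_apply, Complex.re_sum]
  refine Finset.sum_congr rfl fun j _ => ?_
  simp only [mul_diagonal, diagonal_mul, star_apply, Complex.star_def]
  rw [show (f (hA.eigenvalues i) : ℂ) * W i j * g (hB.eigenvalues j) * starRingEnd ℂ (W i j) =
      f (hA.eigenvalues i) * g (hB.eigenvalues j) * (W i j * starRingEnd ℂ (W i j)) by ring,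
    Complex.mul_conj]
  norm_cast

lemma exists_mem_unitaryGroup_eq_mul_abs {X : Matrix n n ℂ} (hX : IsUnit X) :
    ∃ U ∈ unitaryGroup n ℂ, X = U * CFC.abs X := by
  set P := CFC.abs X
  have hP : IsUnit P.det := (isUnit_iff_isUnit_det P).1 <|
    (CFC.isUnit_sqrt_iff _ (star_mul_self_nonneg X)).2 (hX.star.mul hX)
  have hPsa : Pᴴ = P := (CFC.abs_nonneg X).isSelfAdjoint
  refine ⟨X * P⁻¹, ?_, by rw [mul_assoc, nonsing_inv_mul P hP, mul_one]⟩
  rw [mem_unitaryGroup_iff', star_eq_conjTranspose, conjTranspose_mul, conjTranspose_nonsing_inv,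
    hPsa, mul_assoc, ← mul_assoc Xᴴ, ← star_eq_conjTranspose, ← CFC.abs_mul_abs, ← mul_assoc,
    ← mul_assoc, nonsing_inv_mul P hP, one_mul, mul_nonsing_inv P hP]

lemma re_trace_mul_le_re_trace {U P : Matrix n n ℂ} (hU : U ∈ unitaryGroup n ℂ)
    (hP : P.PosSemidef) : (U * P).trace.re ≤ P.trace.re := by
  set V := hP.1.eigenvectorUnitary
  have hW : star (V : Matrix n n ℂ) * U * V ∈ unitaryGroup n ℂ :=
    mul_mem (mul_mem (Unitary.star_mem V.2) hU) V.2
  have htrace : (U * P).trace =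
      ∑ i, (star (V : Matrix n n ℂ) * U * V) i i * (hP.1.eigenvalues i : ℂ) := by
    conv_lhs => rw [hP.1.spectral_theorem, Unitary.conjStarAlgAut_apply]
    rw [← mul_assoc, ← mul_assoc, trace_mul_cycle, ← mul_assoc]
    simp only [trace, diag, mul_diagonal, Function.comp_apply]
    rfl
  rw [htrace, hP.1.trace_eq_sum_eigenvalues, Complex.re_sum, Complex.re_sum]
  refine Finset.sum_le_sum fun i _ => ?_
  have hWii : ((star (V : Matrix n n ℂ) * U * V) i i).re ≤ 1 :=
    (Complex.re_le_norm _).trans (entry_norm_bound_of_unitary hW i i)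
  simpa using mul_le_of_le_one_left (hP.eigenvalues_nonneg i) hWii

lemma re_trace_le_traceNorm {X : Matrix n n ℂ} (hX : IsUnit X) : X.trace.re ≤ traceNorm X := by
  obtain ⟨U, hU, hXU⟩ := exists_mem_unitaryGroup_eq_mul_abs hX
  rw [traceNorm_eq_re_trace_abs]
  conv_lhs => rw [hXU]
  exact re_trace_mul_le_re_trace hU (CFC.abs_nonneg X).posSemidef

lemma normSq_mem_doublyStochastic {W : Matrix n n ℂ} (hW : W ∈ unitaryGroup n ℂ) :
    of (fun i j => Complex.normSq (W i j)) ∈ doublyStochastic ℝ n := by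
  rw [mem_doublyStochastic_iff_sum]
  refine ⟨fun i j => Complex.normSq_nonneg _, fun i => ?_, fun j => ?_⟩
  · have := congrArg (fun M : Matrix n n ℂ => (M i i).re) (mem_unitaryGroup_iff.1 hW)
    simpa [mul_apply, one_apply, Complex.normSq_apply, mul_comm] using this
  · have := congrArg (fun M : Matrix n n ℂ => (M j j).re) (mem_unitaryGroup_iff'.1 hW)
    simpa [mul_apply, one_apply, Complex.normSq_apply, mul_comm] using this

lemma exists_perm_sum_le_of_mem_doublyStochastic {D : Matrix n n ℝ}
    (hD : D ∈ doublyStochastic ℝ n) (c : n → n → ℝ) :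
    ∃ π : Equiv.Perm n, ∑ i, c i (π i) ≤ ∑ i, ∑ j, c i j * D i j := by
  let φ : Matrix n n ℝ →ₗ[ℝ] ℝ :=
    { toFun := fun M => ∑ i, ∑ j, c i j * M i j
      map_add' := fun M N => by simp only [Matrix.add_apply, mul_add, Finset.sum_add_distrib]
      map_smul' := fun r M => by
        simp only [Matrix.smul_apply, smul_eq_mul, RingHom.id_apply, Finset.mul_sum]
        exact Finset.sum_congr rfl fun i _ => Finset.sum_congr rfl fun j _ => by ring }
  have hD' : D ∈ convexHull ℝ {M | ∃ π : Equiv.Perm n, π.permMatrix ℝ = M} := by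
    rw [← doublyStochastic_eq_convexHull_permMatrix]; exact hD
  obtain ⟨_, ⟨π, rfl⟩, hπ⟩ := (φ.concaveOn convex_univ).exists_le_of_mem_convexHull
    (Set.subset_univ _) hD'
  refine ⟨π, le_of_eq_of_le ?_ hπ⟩
  simp [φ, Equiv.Perm.permMatrix, PEquiv.toMatrix_apply]

lemma exists_perm_sum_sqrt_mul_sqrt_le_fidelity {ρ σ : Matrix n n ℂ} (hρ : ρ.PosDef)
    (hσ : σ.PosDef) : ∃ π : Equiv.Perm n,
      ∑ i, √(hρ.1.eigenvalues i) * √(hσ.1.eigenvalues (π i)) ≤ fidelity ρ σ := by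
  have hW : star (hρ.1.eigenvectorUnitary : Matrix n n ℂ) * hσ.1.eigenvectorUnitary ∈
      unitaryGroup n ℂ := mul_mem (Unitary.star_mem (SetLike.coe_mem _)) (SetLike.coe_mem _)
  obtain ⟨π, hπ⟩ := exists_perm_sum_le_of_mem_doublyStochastic (normSq_mem_doublyStochastic hW)
    fun i j => √(hρ.1.eigenvalues i) * √(hσ.1.eigenvalues j)
  refine ⟨π, hπ.trans ?_⟩
  calc _ = (msqrt ρ * msqrt σ).trace.re := (re_trace_cfc_mul_cfc hρ.1 hσ.1 _ _).symm
    _ ≤ fidelity ρ σ := re_trace_le_traceNorm ((isUnit_msqrt hρ).mul (isUnit_msqrt hσ))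

end MatrixAnalysis

section RealSums

variable {ι : Type*} [Fintype ι]

lemma sum_mul_le_sum_mul_perm_of_antivary {a b : ι → ℝ} {e₁ e₂ : Equiv.Perm ι}
    (h : Antivary (a ∘ e₁) (b ∘ e₂)) (π : Equiv.Perm ι) :
    ∑ j, a (e₁ j) * b (e₂ j) ≤ ∑ i, a i * b (π i) :=
  calc ∑ j, a (e₁ j) * b (e₂ j)
      ≤ ∑ j, (a ∘ e₁) j * (b ∘ e₂) (e₁.trans (π.trans e₂.symm) j) :=
        h.sum_mul_le_sum_mul_comp_perm
    _ = ∑ j, a (e₁ j) * b (π (e₁ j)) := by simp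
    _ = ∑ i, a i * b (π i) := Equiv.sum_comp e₁ fun i => a i * b (π i)

lemma sum_mul_nonneg_of_sum_eq_zero {t f : ι → ℝ} (ht : ∑ i, t i = 0)
    (htf : ∀ i j, t i < 0 → 0 < t j → f i ≤ f j) : 0 ≤ ∑ i, t i * f i := by
  classical
  by_cases hneg : ∃ i, t i < 0
  · obtain ⟨i₀, hi₀⟩ := hneg
    set N := Finset.univ.filter (fun i => t i < 0)
    have hN : N.Nonempty := ⟨i₀, by simpa [N] using hi₀⟩
    set c := N.sup' hN f
    have hterm : ∀ i, 0 ≤ t i * (f i - c) := by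
      intro i
      rcases lt_trichotomy (t i) 0 with hi | hi | hi
      · exact mul_nonneg_of_nonpos_of_nonpos hi.le
          (sub_nonpos.2 (N.le_sup' f (by simpa [N] using hi)))
      · simp [hi]
      · exact mul_nonneg hi.le
          (sub_nonneg.2 (Finset.sup'_le _ _ fun k hk => htf k i (by simpa [N] using hk) hi))
    calc 0 ≤ ∑ i, t i * (f i - c) := Finset.sum_nonneg fun i _ => hterm i
      _ = ∑ i, t i * f i := by simp [mul_sub, Finset.sum_sub_distrib, ← Finset.sum_mul, ht]
  · simp only [not_exists, not_lt] at hneg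
    have h0 := (Finset.sum_eq_zero_iff_of_nonneg fun i _ => hneg i).1 ht
    simp [h0]

lemma sum_sqrt_pos_of_sum_eq_one {p : ι → ℝ} (hp : ∀ i, 0 < p i) (hp1 : ∑ i, p i = 1) :
    0 < ∑ i, √(p i) := by
  have : Nonempty ι := by
    by_contra h
    simp [not_nonempty_iff.1 h] at hp1
  exact Finset.sum_pos (fun i _ => Real.sqrt_pos.2 (hp i)) Finset.univ_nonempty

lemma sum_mul_le_sum_sqrt_div_mul {p f : ι → ℝ} (hp : ∀ i, 0 < p i) (hp1 : ∑ i, p i = 1)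
    (hpf : Antivary p f) :
    ∑ i, p i * f i ≤ ∑ i, √(p i) / (∑ k, √(p k)) * f i := by
  set S := ∑ k, √(p k)
  have hS := sum_sqrt_pos_of_sum_eq_one hp hp1
  have hs : ∀ i, 0 < √(p i) := fun i => Real.sqrt_pos.2 (hp i)
  have ht : ∀ i, √(p i) / S - p i = √(p i) * (S⁻¹ - √(p i)) := fun i => by
    rw [mul_sub, ← div_eq_mul_inv, Real.mul_self_sqrt (hp i).le]
  have key := sum_mul_nonneg_of_sum_eq_zero (t := fun i => √(p i) / S - p i) (f := f) ?_ ?_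
  · simpa [sub_mul, Finset.sum_sub_distrib] using key
  · simp [Finset.sum_sub_distrib, ← Finset.sum_div, S, hp1, hS.ne']
  · intro i j hi hj
    simp only [ht] at hi hj
    have hi' : S⁻¹ < √(p i) := sub_neg.1 (neg_of_mul_neg_right hi (hs i).le)
    have hj' : √(p j) < S⁻¹ := sub_pos.1 (pos_of_mul_pos_right hj (hs j).le)
    have hpji : p j < p i := (Real.sqrt_lt_sqrt_iff (hp j).le).1 (hj'.trans hi')
    exact le_of_not_gt fun h => (hpf h).not_gt hpji

lemma sum_sqrt_mul_exp_le_sum_sqrt_mul_sqrt {p q : ι → ℝ} (hp : ∀ i, 0 < p i)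
    (hq : ∀ i, 0 < q i) (hp1 : ∑ i, p i = 1) (hpq : Antivary p q) :
    (∑ i, √(p i)) * Real.exp (1 / 2 * ∑ i, p i * Real.log (q i)) ≤ ∑ i, √(p i) * √(q i) := by
  set S := ∑ k, √(p k)
  have hS : 0 < S := sum_sqrt_pos_of_sum_eq_one hp hp1
  have hw0 : ∀ i ∈ Finset.univ, 0 ≤ √(p i) / S := fun i _ => by positivity
  have hw1 : ∑ i, √(p i) / S = 1 := by rw [← Finset.sum_div, div_self hS.ne']
  have hlog : 1 / 2 * ∑ i, p i * Real.log (q i) ≤ ∑ i, √(p i) / S * Real.log √(q i) := by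
    have hpq' : Antivary p (Real.log ∘ q) := fun i j h =>
      hpq ((Real.log_lt_log_iff (hq i) (hq j)).1 h)
    have := sum_mul_le_sum_sqrt_div_mul hp hp1 hpq'
    simp only [Function.comp_apply] at this
    simp only [Real.log_sqrt (hq _).le, mul_div_assoc', ← Finset.sum_div]
    linarith
  have hjensen : Real.exp (∑ i, √(p i) / S * Real.log √(q i)) ≤ ∑ i, √(p i) / S * √(q i) := by
    have := convexOn_exp.map_sum_le hw0 hw1 (fun i _ => Set.mem_univ (Real.log √(q i)))
    simpa only [smul_eq_mul, Real.exp_log (Real.sqrt_pos.2 (hq _))] using this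
  calc S * Real.exp (1 / 2 * ∑ i, p i * Real.log (q i))
      ≤ S * ∑ i, √(p i) / S * √(q i) := by
        gcongr; exact (Real.exp_le_exp.2 hlog).trans hjensen
    _ = ∑ i, √(p i) * √(q i) := by
        rw [Finset.mul_sum]
        exact Finset.sum_congr rfl fun i _ => by field_simp

end RealSums

theorem fidelity_lower_bound_general {d : ℕ}
    (ρ σ : Matrix (Fin d) (Fin d) ℂ) (hρ : ρ.PosDef) (hσ : σ.PosDef)
    (hρ1 : ρ.trace = 1) :
    fidelity ρ σ ≥ (msqrt ρ).trace.re * Real.exp (-(1 / 2) * vnEnt ρ -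
      (1 / 2) * ∑ j : Fin d,
        (hρ.1.eigenvalues (Tuple.sort hρ.1.eigenvalues j.rev)) *
          Real.log ((hρ.1.eigenvalues (Tuple.sort hρ.1.eigenvalues j.rev)) /
            (hσ.1.eigenvalues (Tuple.sort hσ.1.eigenvalues j)))) := by
  set α := hρ.1.eigenvalues
  set β := hσ.1.eigenvalues
  set e₁ : Equiv.Perm (Fin d) := Fin.revPerm.trans (Tuple.sort α)
  set e₂ : Equiv.Perm (Fin d) := Tuple.sort β
  have hα : ∀ i, 0 < α i := hρ.eigenvalues_pos
  have hβ : ∀ i, 0 < β i := hσ.eigenvalues_pos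
  have hαβ : Antivary (α ∘ e₁) (β ∘ e₂) :=
    ((Tuple.monotone_sort α).comp_antitone Fin.rev_anti).antivary (Tuple.monotone_sort β)
  have hα1 : ∑ j, α (e₁ j) = 1 := (Equiv.sum_comp e₁ α).trans (sum_eigenvalues_eq_one hρ.1 hρ1)
  have hexponent : -(1 / 2) * vnEnt ρ - 1 / 2 * ∑ j, α (e₁ j) * Real.log (α (e₁ j) / β (e₂ j)) =
      1 / 2 * ∑ j, α (e₁ j) * Real.log (β (e₂ j)) := by
    rw [vnEnt_eq_neg_sum hρ.1, ← Equiv.sum_comp e₁ fun i => α i * Real.log (α i)]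
    simp only [Real.log_div (hα _).ne' (hβ _).ne', mul_sub, Finset.sum_sub_distrib]
    ring
  obtain ⟨π, hπ⟩ := exists_perm_sum_sqrt_mul_sqrt_le_fidelity hρ hσ
  change (msqrt ρ).trace.re * Real.exp (-(1 / 2) * vnEnt ρ -
    1 / 2 * ∑ j, α (e₁ j) * Real.log (α (e₁ j) / β (e₂ j))) ≤ fidelity ρ σ
  rw [hexponent, re_trace_msqrt hρ.1, ← Equiv.sum_comp e₁ fun i => √(α i)]
  calc _ ≤ ∑ j, √(α (e₁ j)) * √(β (e₂ j)) :=
        sum_sqrt_mul_exp_le_sum_sqrt_mul_sqrt (fun _ => hα _) (fun _ => hβ _) hα1 hαβ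
    _ ≤ ∑ i, √(α i) * √(β (π i)) :=
        sum_mul_le_sum_mul_perm_of_antivary (a := fun i => √(α i)) (b := fun i => √(β i))
          ((hαβ.comp_monotone_left Real.sqrt_monotone).symm.comp_monotone_left
            Real.sqrt_monotone).symm π
    _ ≤ fidelity ρ σ := hπ

theorem fidelity_lower_bound {d : ℕ}
    (ρ σ : Matrix (Fin d) (Fin d) ℂ) (hρ : ρ.PosDef) (hσ : σ.PosDef)
    (hρ1 : ρ.trace = 1) (hσ1 : σ.trace = 1) :
    fidelity ρ σ ≥ (msqrt ρ).trace.re * Real.exp (-(1 / 2) * vnEnt ρ -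
      (1 / 2) * ∑ j : Fin d,
        (hρ.1.eigenvalues (Tuple.sort hρ.1.eigenvalues j.rev)) *
          Real.log ((hρ.1.eigenvalues (Tuple.sort hρ.1.eigenvalues j.rev)) /
            (hσ.1.eigenvalues (Tuple.sort hσ.1.eigenvalues j)))) :=
  fidelity_lower_bound_general ρ σ hρ hσ hρ1
end
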